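/- Over a field K of characteristic 2, for a series Σ_{n≥0} αₙXⁿ with α₀ = 1, its shuffle logarithm is given by log⧢(Σ αₙXⁿ) = Σ_{n≥0} α_{2ⁿ}² X^{2^{n+1}} + Σ_{0≤i<j} C(i+j, i) αᵢαⱼ X^{i+j}. -/

import Mathlib

open PowerSeries
open scoped Classical

/-- The shuffle logarithm `log⧢(B) = Σ_{k≥1} (−1)^{k+1} (B−1)^{⧢k}/k` of a series `B` with
constant coefficient `1`, well-defined over any field: by the exponential formula its
`n`-th coefficient (`n ≥ 1`) is the integer polynomial
`Σ_π (−1)^{|π|+1} (|π|−1)! ∏_{b ∈ π} β_{|b|}` in the coefficients of `B`, where `π` runs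
over the set partitions of an `n`-element set. -/
noncomputable def logSh {K : Type*} [Field K] (B : PowerSeries K) : PowerSeries K :=
  PowerSeries.mk fun n =>
    if n = 0 then 0 else
      ∑ π : Finpartition (Finset.univ : Finset (Fin n)),
        (((-1) ^ (π.parts.card + 1) * (Nat.factorial (π.parts.card - 1) : ℤ) : ℤ) : K) *
          ∏ b ∈ π.parts, coeff b.card B

open Finset

/-! In characteristic `2` the weight `(-1)^(k+1) (k-1)!` of a set partition into `k` blocks is `1`
for `k ≤ 2` and `0` for `k ≥ 3`, so the `m`-th coefficient of `log⧢ A` is the sum of `α_|S| α_|Sᶜ|`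
over the partitions `{S, Sᶜ}` of an `m`-set; choosing `S` as the block of a fixed element `a`, it is
a sum over the sets `S ∋ a`. Complementation exchanges the `S ∋ a` with `2|S| > m` and the `S ∌ a`
with `2|S| < m`, which leaves `Σ_{2i<m} C(m,i) αᵢ α_{m-i}` plus the `C(2k-1, k-1)` sets `S ∋ a` with
`|S| = k` when `m = 2k`. By Lucas' theorem this binomial coefficient is odd exactly when `k` is a
power of `2`. -/

namespace Finset

variable {α : Type*} [Fintype α]

theorem sum_filter_two_mul_card_lt {M : Type*} [AddCommMonoid M] (g : ℕ → M) :
    ∑ s : Finset α with 2 * #s < Fintype.card α, g #s =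
      ∑ i ∈ range (Fintype.card α),
        if 2 * i < Fintype.card α then (Fintype.card α).choose i • g i else 0 := by
  rw [sum_filter, ← powerset_univ,
    sum_powerset_apply_card (fun i => if 2 * i < Fintype.card α then g i else 0), card_univ,
    sum_range_succ, if_neg (by omega), smul_zero, add_zero]
  simp_rw [smul_ite, smul_zero]

variable [DecidableEq α]

theorem sum_filter_mem_eq_add {M : Type*} [AddCommMonoid M] (a : α) (G : Finset α → M)
    (hG : ∀ s, G sᶜ = G s) :
    ∑ s with a ∈ s, G s =
      ∑ s with 2 * #s < Fintype.card α, G s + ∑ s with a ∈ s ∧ 2 * #s = Fintype.card α, G s := by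
  set n := Fintype.card α
  have hcompl : ∑ s with a ∈ s ∧ n < 2 * #s, G s = ∑ s with 2 * #s < n ∧ a ∉ s, G s := by
    refine sum_nbij' compl compl (fun s hs => ?_) (fun s hs => ?_) (fun s _ => compl_compl s)
      (fun s _ => compl_compl s) fun s _ => (hG s).symm
    all_goals
      simp only [mem_filter, mem_univ, true_and, mem_compl, Decidable.not_not, card_compl] at hs ⊢
      have := card_le_univ s
    · exact ⟨by omega, hs.1⟩
    · exact ⟨hs.2, by omega⟩
  calc ∑ s with a ∈ s, G s
      = ∑ s with 2 * #s < n ∧ a ∈ s, G s + ∑ s with a ∈ s ∧ 2 * #s = n, G s +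
          ∑ s with a ∈ s ∧ n < 2 * #s, G s := by
        simp only [sum_filter, ← sum_add_distrib]
        refine sum_congr rfl fun s _ => ?_
        by_cases ha : a ∈ s <;> split_ifs <;> simp_all <;> omega
    _ = ∑ s with 2 * #s < n, G s + ∑ s with a ∈ s ∧ 2 * #s = n, G s := by
        rw [hcompl, add_right_comm, ← filter_filter, ← filter_filter,
          sum_filter_add_sum_filter_not]

theorem card_filter_mem_card_eq_succ (a : α) (k : ℕ) :
    #{s : Finset α | a ∈ s ∧ #s = k + 1} = (Fintype.card α - 1).choose k := by
  rw [← card_univ, ← card_erase_of_mem (mem_univ a), ← card_powersetCard]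
  have hnot {t : Finset α} (ht : t ∈ powersetCard k (univ.erase a)) : a ∉ t :=
    fun h => notMem_erase a univ ((mem_powersetCard.1 ht).1 h)
  refine card_nbij' (·.erase a) (insert a) (fun s hs => ?_) (fun t ht => ?_)
    (fun s hs => insert_erase (mem_filter.1 hs).2.1) (fun t ht => erase_insert (hnot ht))
  · simp only [coe_filter, mem_univ, true_and, Set.mem_ofPred_eq] at hs
    simp [mem_powersetCard, erase_subset_erase, card_erase_of_mem hs.1, hs.2]
  · simp [card_insert_of_notMem (hnot ht), (mem_powersetCard.1 ht).2]

end Finset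

theorem Nat.exists_two_mul_eq_two_pow_iff (n : ℕ) : (∃ t, 2 * n = 2 ^ t) ↔ ∃ t, n = 2 ^ t := by
  constructor
  · rintro ⟨_ | t, ht⟩
    · omega
    · exact ⟨t, by rw [pow_succ'] at ht; omega⟩
  · exact fun ⟨t, ht⟩ => ⟨t + 1, by rw [pow_succ']; omega⟩

namespace CharTwo

variable {R : Type*}

theorem intCast_neg_one_pow_mul_factorial [Ring R] [CharP R 2] (k : ℕ) :
    (((-1) ^ (k + 1) * ((k - 1).factorial : ℤ) : ℤ) : R) = if k ≤ 2 then 1 else 0 := by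
  split_ifs with hk
  · interval_cases k <;> simp [neg_eq]
  · have h2 : 2 ∣ (k - 1).factorial := Nat.dvd_factorial two_pos (by omega)
    simp [(CharP.cast_eq_zero_iff R 2 _).2 h2]

theorem natCast_choose_two_mul_add_one [AddGroupWithOne R] [CharP R 2] (j : ℕ) :
    (((2 * j + 1).choose j : ℕ) : R) = if ∃ t, j + 1 = 2 ^ t then 1 else 0 := by
  induction j using Nat.strong_induction_on with
  | _ j ih =>
  have lucas : (((2 * j + 1).choose j : ℕ) : R) = (j.choose (j / 2) : ℕ) := by
    rw [(CharP.natCast_eq_natCast R 2).2 Choose.choose_modEq_choose_mod_mul_choose_div_nat,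
      show (2 * j + 1) % 2 = 1 by omega, show (2 * j + 1) / 2 = j by omega]
    rcases Nat.mod_two_eq_zero_or_one j with h | h <;> simp [h]
  rw [lucas]
  obtain ⟨i, rfl | rfl⟩ := j.even_or_odd'
  · rcases i.eq_zero_or_pos with rfl | hi
    · simp [if_pos (⟨0, rfl⟩ : ∃ t, 1 = 2 ^ t)]
    rw [show 2 * i / 2 = i by omega, ← Nat.centralBinom_eq_two_mul_choose, natCast_eq_ite,
      if_pos (even_iff_two_dvd.2 (Nat.two_dvd_centralBinom_of_one_le hi)), if_neg]
    rintro ⟨_ | t, ht⟩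
    · omega
    · rw [pow_succ] at ht; omega
  · rw [show (2 * i + 1) / 2 = i by omega, ih i (by omega)]
    simp only [show 2 * i + 1 + 1 = 2 * (i + 1) by ring, Nat.exists_two_mul_eq_two_pow_iff]

theorem sum_filter_mem_two_mul_card_eq [Ring R] [CharP R 2] {α : Type*} [Fintype α]
    [DecidableEq α] (a : α) (g : ℕ → R) :
    ∑ s with a ∈ s ∧ 2 * #s = Fintype.card α, g #s =
      if ∃ t, Fintype.card α = 2 ^ (t + 1) then g (Fintype.card α / 2) else 0 := by
  obtain ⟨k, hk | hk⟩ := (Fintype.card α).even_or_odd'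
  · obtain ⟨j, rfl⟩ : ∃ j, k = j + 1 :=
      Nat.exists_eq_succ_of_ne_zero (by have := Fintype.card_pos_iff.2 ⟨a⟩; omega)
    have hfilter : filter (fun s : Finset α => a ∈ s ∧ 2 * #s = Fintype.card α) univ =
        filter (fun s => a ∈ s ∧ #s = j + 1) univ :=
      filter_congr fun s _ => and_congr_right fun _ => by omega
    rw [hfilter, sum_congr rfl fun s hs => by rw [(mem_filter.1 hs).2.2], sum_const,
      card_filter_mem_card_eq_succ, nsmul_eq_mul, show Fintype.card α - 1 = 2 * j + 1 by omega,
      natCast_choose_two_mul_add_one, hk, Nat.mul_div_cancel_left _ two_pos]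
    simp [pow_succ']
  · rw [if_neg, sum_eq_zero fun s hs => absurd (mem_filter.1 hs).2.2 (by omega)]
    rintro ⟨t, ht⟩
    rw [pow_succ] at ht
    omega

end CharTwo

namespace Finpartition

variable {α : Type*} [Fintype α] [DecidableEq α]

def ofCompl (s : Finset α) : Finpartition (univ : Finset α) :=
  ofErase {s, sᶜ}
    (by
      by_cases h : s = sᶜ
      · simp [← h]
      · exact (supIndep_pair h).2 disjoint_compl_right)
    (by simp)

@[simp]
theorem mem_ofCompl_parts {s t : Finset α} :
    t ∈ (ofCompl s).parts ↔ t.Nonempty ∧ (t = s ∨ t = sᶜ) := by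
  simp [ofCompl, nonempty_iff_ne_empty]

theorem card_ofCompl_parts_le (s : Finset α) : #(ofCompl s).parts ≤ 2 :=
  (card_erase_le).trans (card_insert_le _ _)

theorem ofCompl_part {s : Finset α} {a : α} (ha : a ∈ s) : (ofCompl s).part a = s :=
  (ofCompl s).part_eq_of_mem (mem_ofCompl_parts.2 ⟨⟨a, ha⟩, .inl rfl⟩) ha

theorem eq_compl_of_card_parts_le_two {P : Finpartition (univ : Finset α)} (hP : #P.parts ≤ 2)
    {s t : Finset α} (hs : s ∈ P.parts) (ht : t ∈ P.parts) (hst : s ≠ t) : t = sᶜ := by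
  have hparts : P.parts = {s, t} :=
    (eq_of_subset_of_card_le (insert_subset hs (singleton_subset_iff.2 ht))
      (hP.trans (card_pair hst).ge)).symm
  have hsup : t ∪ s = univ := by simpa [hparts, union_comm] using P.sup_parts
  exact eq_compl_iff_isCompl.2 ⟨(P.disjoint hs ht hst).symm, codisjoint_iff.2 hsup⟩

theorem ofCompl_part_eq {P : Finpartition (univ : Finset α)} (hP : #P.parts ≤ 2) (a : α) :
    ofCompl (P.part a) = P := by
  have hpart : P.part a ∈ P.parts := P.part_mem.2 (mem_univ a)
  ext t
  rw [mem_ofCompl_parts]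
  constructor
  · rintro ⟨⟨x, hx⟩, rfl | rfl⟩
    · exact hpart
    · have hxa : P.part x ≠ P.part a := fun h => (mem_compl.1 hx) (h ▸ P.mem_part (mem_univ x))
      rw [← eq_compl_of_card_parts_le_two hP hpart (P.part_mem.2 (mem_univ x)) hxa.symm]
      exact P.part_mem.2 (mem_univ x)
  · intro ht
    refine ⟨P.nonempty_of_mem_parts ht, ?_⟩
    by_cases hta : P.part a = t
    · exact .inl hta.symm
    · exact .inr (eq_compl_of_card_parts_le_two hP hpart ht hta)

theorem prod_ofCompl_parts {M : Type*} [CommMonoid M] {f : ℕ → M} (hf : f 0 = 1)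
    {s : Finset α} (hs : s.Nonempty) :
    ∏ t ∈ (ofCompl s).parts, f #t = f #s * f (Fintype.card α - #s) := by
  have hne : s ≠ sᶜ := fun h => by
    obtain ⟨x, hx⟩ := hs
    exact (mem_compl.1 (h ▸ hx)) hx
  rw [ofCompl, ofErase_parts, prod_erase _ (by simpa using hf), prod_pair hne, card_compl]

theorem sum_filter_card_parts_le_two {R : Type*} [CommSemiring R] (a : α) {f : ℕ → R}
    (hf : f 0 = 1) :
    ∑ P : Finpartition (univ : Finset α) with #P.parts ≤ 2, ∏ t ∈ P.parts, f #t =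
      ∑ s with a ∈ s, f #s * f (Fintype.card α - #s) := by
  refine sum_nbij' (·.part a) ofCompl (fun P _ => by simp [P.mem_part (mem_univ a)])
    (fun s _ => by simp [card_ofCompl_parts_le]) (fun P hP => ofCompl_part_eq (mem_filter.1 hP).2 a)
    (fun s hs => ofCompl_part (mem_filter.1 hs).2) fun P hP => ?_
  rw [← ofCompl_part_eq (mem_filter.1 hP).2 a, ofCompl_part (P.mem_part (mem_univ a))]
  exact prod_ofCompl_parts hf ⟨a, P.mem_part (mem_univ a)⟩

end Finpartition

theorem coeff_logSh_eq_sum_card_parts_le_two {K : Type*} [Field K] [CharP K 2]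
    (B : PowerSeries K) {n : ℕ} (hn : n ≠ 0) :
    coeff n (logSh B) = ∑ π : Finpartition (univ : Finset (Fin n)) with #π.parts ≤ 2,
      ∏ b ∈ π.parts, coeff #b B := by
  rw [logSh, coeff_mk, if_neg hn, sum_filter]
  refine sum_congr rfl fun π _ => ?_
  rw [CharTwo.intCast_neg_one_pow_mul_factorial, ite_mul, one_mul, zero_mul]

theorem logSh_char_two {K : Type*} [Field K] [CharP K 2]
    (A : PowerSeries K) (hA : constantCoeff A = 1) :
    logSh A = PowerSeries.mk fun m =>
      (if ∃ n : ℕ, m = 2 ^ (n + 1) then (coeff (m / 2) A) ^ 2 else 0) +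
        ∑ i ∈ Finset.range m,
          if 2 * i < m then (m.choose i : K) * coeff i A * coeff (m - i) A else 0 := by
  ext m
  rcases Nat.eq_zero_or_pos m with rfl | hm
  · simp only [logSh, coeff_mk, if_true, range_zero, sum_empty, add_zero]
    exact (if_neg fun ⟨t, ht⟩ => pow_ne_zero _ two_ne_zero ht.symm).symm
  let a : Fin m := ⟨0, hm⟩
  let g (i : ℕ) : K := coeff i A * coeff (Fintype.card (Fin m) - i) A
  have hg (s : Finset (Fin m)) : g #sᶜ = g #s := by
    simp only [g, card_compl, Nat.sub_sub_self (card_le_univ s), mul_comm]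
  rw [coeff_logSh_eq_sum_card_parts_le_two A hm.ne',
    Finpartition.sum_filter_card_parts_le_two a (f := fun i => coeff i A) (by simpa using hA),
    sum_filter_mem_eq_add a (g #·) hg, CharTwo.sum_filter_mem_two_mul_card_eq a g,
    sum_filter_two_mul_card_lt g, Fintype.card_fin, coeff_mk, add_comm]
  congr 1
  · split_ifs with hpow
    · obtain ⟨t, rfl⟩ := hpow
      have hhalf : 2 ^ (t + 1) / 2 = 2 ^ t := by rw [pow_succ, Nat.mul_div_cancel _ two_pos]
      simp only [g, Fintype.card_fin, hhalf, sq]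
      rw [show 2 ^ (t + 1) - 2 ^ t = 2 ^ t by rw [pow_succ]; omega]
    · rfl
  · simp only [g, Fintype.card_fin, nsmul_eq_mul, mul_assoc]
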